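/- Block-coordinate descent step bound from Lemma 3: under the hypotheses of the block-Lipschitz lemma (convex differentiable $f$ with blockwise gradient Lipschitz constants $L_1, L_2$), for any $(x_1, x_2)$ the doubled-constant prox step $z_i = x_i - \tfrac{1}{2L_i}\nabla_{x_i} f(x_1, x_2)$ ($i = 1,2$) satisfies $f(z_1, z_2) \leq f(x_1, x_2) - \tfrac{1}{4L_1}\|\nabla_{x_1} f(x_1,x_2)\|^2 - \tfrac{1}{4L_2}\|\nabla_{x_2} f(x_1,x_2)\|^2$. -/

import Mathlib

/-!
Along the segment from `x` to `y`, the slope of `φ` exceeds its initial slope by at most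
`L t ‖y - x‖²`, so `φ` lies below its tangent plus `L/2 ‖y - x‖²` (the descent lemma). Hence a
gradient step of length `1/L` in one block decreases `f` by `‖∇ᵢ f‖² / (2L)`. The doubled-constant
step is the midpoint of the two single-block steps, so convexity of `f` averages the two decreases.
-/

open scoped RealInnerProductSpace

variable {E : Type*} [NormedAddCommGroup E] [InnerProductSpace ℝ E] [CompleteSpace E]

theorem HasGradientAt.hasDerivAt_comp_add_smul {φ : E → ℝ} {g x d : E} {t : ℝ}
    (h : HasGradientAt φ g (x + t • d)) :
    HasDerivAt (fun s : ℝ => φ (x + s • d)) ⟪g, d⟫ t := by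
  have hline : HasDerivAt (fun s : ℝ => x + s • d) d t := by
    simpa using ((hasDerivAt_id t).smul_const d).const_add x
  have hcomp := h.hasFDerivAt.comp_hasDerivAt t hline
  simp only [InnerProductSpace.toDual_apply_apply] at hcomp
  exact hcomp

theorem le_add_inner_add_of_lipschitz_gradient {φ : E → ℝ} {g : E → E} {L : ℝ}
    (hg : ∀ x, HasGradientAt φ (g x) x) (hLip : ∀ a b, ‖g a - g b‖ ≤ L * ‖a - b‖) (x y : E) :
    φ y ≤ φ x + ⟪g x, y - x⟫ + L / 2 * ‖y - x‖ ^ 2 := by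
  set d := y - x
  let ψ : ℝ → ℝ := fun t => φ (x + t • d) - t * ⟪g x, d⟫ - L / 2 * t ^ 2 * ‖d‖ ^ 2
  have hψ : ∀ t, HasDerivAt ψ (⟪g (x + t • d) - g x, d⟫ - L * t * ‖d‖ ^ 2) t := by
    intro t
    refine ((((hg (x + t • d)).hasDerivAt_comp_add_smul).sub
      ((hasDerivAt_id t).mul_const ⟪g x, d⟫)).sub
      (((hasDerivAt_pow 2 t).const_mul (L / 2)).mul_const (‖d‖ ^ 2))).congr_deriv ?_
    rw [inner_sub_left]
    ring
  have hψ_nonpos : ∀ t ∈ interior (Set.Icc (0 : ℝ) 1),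
      ⟪g (x + t • d) - g x, d⟫ - L * t * ‖d‖ ^ 2 ≤ 0 := by
    intro t ht
    rw [interior_Icc] at ht
    have hbound : ⟪g (x + t • d) - g x, d⟫ ≤ L * t * ‖d‖ ^ 2 := calc
      ⟪g (x + t • d) - g x, d⟫ ≤ ‖g (x + t • d) - g x‖ * ‖d‖ := real_inner_le_norm _ _
      _ ≤ L * ‖x + t • d - x‖ * ‖d‖ := by gcongr; exact hLip _ _
      _ = L * t * ‖d‖ ^ 2 := by
        rw [add_sub_cancel_left, norm_smul, Real.norm_of_nonneg ht.1.le]; ring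
    linarith
  have h01 := antitoneOn_of_hasDerivWithinAt_nonpos (convex_Icc 0 1)
    (fun t _ => (hψ t).continuousAt.continuousWithinAt) (fun t _ => (hψ t).hasDerivWithinAt)
    hψ_nonpos (Set.left_mem_Icc.2 zero_le_one) (Set.right_mem_Icc.2 zero_le_one) zero_le_one
  simp only [ψ, d, zero_smul, add_zero, one_smul, add_sub_cancel] at h01
  linarith

theorem le_sub_of_gradient_step {φ : E → ℝ} {g : E → E} {L : ℝ} (hL : 0 < L)
    (hg : ∀ x, HasGradientAt φ (g x) x) (hLip : ∀ a b, ‖g a - g b‖ ≤ L * ‖a - b‖) (x : E) :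
    φ (x - L⁻¹ • g x) ≤ φ x - (2 * L)⁻¹ * ‖g x‖ ^ 2 := by
  have h := le_add_inner_add_of_lipschitz_gradient hg hLip x (x - L⁻¹ • g x)
  rw [sub_sub_cancel_left, inner_neg_right, real_inner_smul_right, real_inner_self_eq_norm_sq,
    norm_neg, norm_smul, Real.norm_of_nonneg (inv_nonneg.2 hL.le)] at h
  convert h using 1
  field_simp
  ring

/-- block-coordinate descent step bound from Lemma 3: the doubled-constant
step `z_i = x_i - (1/(2L_i)) ∇_{x_i} f(x₁,x₂)` decreases `f` by at least
`‖∇_{x₁}f‖²/(4L₁) + ‖∇_{x₂}f‖²/(4L₂)`. -/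
theorem block_coordinate_descent_step_bound
    (m1 m2 : ℕ)
    (f : EuclideanSpace ℝ (Fin m1) × EuclideanSpace ℝ (Fin m2) → ℝ)
    (hconv : ConvexOn ℝ Set.univ f)
    (g1 : EuclideanSpace ℝ (Fin m1) × EuclideanSpace ℝ (Fin m2) → EuclideanSpace ℝ (Fin m1))
    (g2 : EuclideanSpace ℝ (Fin m1) × EuclideanSpace ℝ (Fin m2) → EuclideanSpace ℝ (Fin m2))
    (hg1 : ∀ x1 x2, HasGradientAt (fun z1 => f (z1, x2)) (g1 (x1, x2)) x1)
    (hg2 : ∀ x1 x2, HasGradientAt (fun z2 => f (x1, z2)) (g2 (x1, x2)) x2)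
    (L1 L2 : ℝ) (hL1pos : 0 < L1) (hL2pos : 0 < L2)
    (hL1 : ∀ x2 a b, ‖g1 (a, x2) - g1 (b, x2)‖ ≤ L1 * ‖a - b‖)
    (hL2 : ∀ x1 a b, ‖g2 (x1, a) - g2 (x1, b)‖ ≤ L2 * ‖a - b‖) :
    ∀ x1 x2,
      f (x1 - (1 / (2 * L1)) • g1 (x1, x2), x2 - (1 / (2 * L2)) • g2 (x1, x2)) ≤
        f (x1, x2) - (1 / (4 * L1)) * ‖g1 (x1, x2)‖^2 - (1 / (4 * L2)) * ‖g2 (x1, x2)‖^2 := by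
  intro x1 x2
  have descent1 := le_sub_of_gradient_step hL1pos (hg1 · x2) (hL1 x2) x1
  have descent2 := le_sub_of_gradient_step hL2pos (hg2 x1 ·) (hL2 x1) x2
  have hmid : (x1 - (1 / (2 * L1)) • g1 (x1, x2), x2 - (1 / (2 * L2)) • g2 (x1, x2)) =
      (1 / 2 : ℝ) • (x1 - L1⁻¹ • g1 (x1, x2), x2) +
        (1 / 2 : ℝ) • (x1, x2 - L2⁻¹ • g2 (x1, x2)) := by
    ext1 <;> simp only [Prod.smul_mk, Prod.fst_add, Prod.snd_add, one_div, mul_inv] <;> module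
  have hconvex := hconv.2 (Set.mem_univ (x1 - L1⁻¹ • g1 (x1, x2), x2))
    (Set.mem_univ (x1, x2 - L2⁻¹ • g2 (x1, x2))) (by norm_num) (by norm_num) (add_halves 1)
  rw [← hmid] at hconvex
  linear_combination hconvex + descent1 / 2 + descent2 / 2
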